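/- Let θ* ∈ Θ and suppose Wasserstein score functions Φ_{θ,j} exist for θ in a neighborhood of θ* and are jointly smooth in (θ, x). Fix j, k ∈ {1,…,d} and assume E_{θ*}[A_{θ*}(∇_x ∂_{θ_k} Φ_{θ,j}|_{θ=θ*})] = 0 together with q_{θ*}-integrability of the relevant functions. Then E_{θ*}[∂_{θ_k} ∂_{θ_j} log q_{θ*}] = −E_{θ*}[⟨∇_x Φ_{θ*,j}, ∇_x ∂_{θ_k} log q_{θ*}⟩]. In particular, if Bartlett's second identity I(θ*)_{jk} = −E_{θ*}[∂_{θ_j} ∂_{θ_k} log q_{θ*}] holds for the Fisher information matrix I(θ*)_{jk} = E_{θ*}[(∂_{θ_j} log q_{θ*})(∂_{θ_k} log q_{θ*})], then I(θ*)_{jk} = E_{θ*}[⟨∇_x Φ_{θ*,j}, ∇_x ∂_{θ_k} log q_{θ*}⟩], i.e. the Fisher information equals the Wasserstein–Fisher cross-Gram matrix F. -/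

import Mathlib

open MeasureTheory Real Filter

/-- Partial derivative in the `i`-th coordinate. -/
noncomputable def pdv {n : ℕ} (i : Fin n) (f : (Fin n → ℝ) → ℝ) (x : Fin n → ℝ) : ℝ :=
  deriv (fun t => f (Function.update x i t)) (x i)

/-- Gradient of a scalar function on ℝ^n. -/
noncomputable def gradv {n : ℕ} (f : (Fin n → ℝ) → ℝ) (x : Fin n → ℝ) : Fin n → ℝ :=
  fun i => pdv i f x

/-- Divergence of a vector field on ℝ^n. -/
noncomputable def divv {n : ℕ} (f : (Fin n → ℝ) → (Fin n → ℝ)) (x : Fin n → ℝ) : ℝ :=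
  ∑ i, pdv i (fun y => f y i) x

/-- Divergence-based Stein operator `A_q f = div(q f) / q`. -/
noncomputable def stein {n : ℕ} (q : (Fin n → ℝ) → ℝ) (f : (Fin n → ℝ) → (Fin n → ℝ))
    (x : Fin n → ℝ) : ℝ :=
  divv (fun y i => q y * f y i) x / q x

/-- Gradient (in x) of the `j`-th Fisher score function `∂_{θ_j} log q_θ`. -/
noncomputable def scoreGrad {d p : ℕ} (q : (Fin d → ℝ) → (Fin p → ℝ) → ℝ)
    (θ : Fin d → ℝ) (j : Fin d) (x : Fin p → ℝ) : Fin p → ℝ :=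
  gradv (fun z => pdv j (fun θ' => Real.log (q θ' z)) θ) x

/-! ### Auxiliary lemmas -/

section Aux

lemma hasDerivAt_pdv {n : ℕ} (i : Fin n) (f : (Fin n → ℝ) → ℝ) (x : Fin n → ℝ)
    (hf : DifferentiableAt ℝ f x) :
    HasDerivAt (fun t => f (Function.update x i t)) (fderiv ℝ f x (Pi.single i 1)) (x i) := by
  have h2 : HasDerivAt (Function.update x i) (Pi.single i (1:ℝ)) (x i) :=
    hasDerivAt_update x i (x i)
  have h3 : Function.update x i (x i) = x := Function.update_eq_self i x
  have h4 : HasFDerivAt f (fderiv ℝ f x) (Function.update x i (x i)) := by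
    rw [h3]; exact hf.hasFDerivAt
  have := HasFDerivAt.comp_hasDerivAt (x i) h4 h2
  exact this

lemma pdv_eq_fderiv {n : ℕ} (i : Fin n) (f : (Fin n → ℝ) → ℝ) (x : Fin n → ℝ)
    (hf : DifferentiableAt ℝ f x) :
    pdv i f x = fderiv ℝ f x (Pi.single i 1) :=
  (hasDerivAt_pdv i f x hf).deriv

variable {d p : ℕ}

lemma pdv_fst (G : ((Fin d → ℝ) × (Fin p → ℝ)) → ℝ) (hG : Differentiable ℝ G)
    (θ : Fin d → ℝ) (x : Fin p → ℝ) (k : Fin d) :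
    pdv k (fun θ' => G (θ', x)) θ = fderiv ℝ G (θ, x) (Pi.single k 1, 0) := by
  have h0 := ((hG (θ, x)).hasFDerivAt).comp θ (hasFDerivAt_prodMk_left (𝕜 := ℝ) θ x)
  have h : HasFDerivAt (fun θ' => G (θ', x))
      ((fderiv ℝ G (θ, x)).comp (ContinuousLinearMap.inl ℝ (Fin d → ℝ) (Fin p → ℝ))) θ := h0
  rw [pdv_eq_fderiv _ _ _ h.differentiableAt, h.fderiv]
  simp

lemma pdv_snd (G : ((Fin d → ℝ) × (Fin p → ℝ)) → ℝ) (hG : Differentiable ℝ G)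
    (θ : Fin d → ℝ) (x : Fin p → ℝ) (i : Fin p) :
    pdv i (fun y => G (θ, y)) x = fderiv ℝ G (θ, x) (0, Pi.single i 1) := by
  have h0 := ((hG (θ, x)).hasFDerivAt).comp x (hasFDerivAt_prodMk_right θ x)
  have h : HasFDerivAt (fun y => G (θ, y))
      ((fderiv ℝ G (θ, x)).comp (ContinuousLinearMap.inr ℝ (Fin d → ℝ) (Fin p → ℝ))) x := h0
  rw [pdv_eq_fderiv _ _ _ h.differentiableAt, h.fderiv]
  simp

end Aux

section Aux2

variable {E : Type*} [NormedAddCommGroup E] [NormedSpace ℝ E]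

lemma contDiff_fderiv_apply {G : E → ℝ} (hG : ContDiff ℝ (⊤ : ℕ∞) G) (v : E) :
    ContDiff ℝ (⊤ : ℕ∞) (fun w => fderiv ℝ G w v) :=
  (hG.fderiv_right (by simp)).clm_apply contDiff_const

lemma hasFDerivAt_fderiv_apply {G : E → ℝ} (hG : ContDiff ℝ (⊤ : ℕ∞) G) (v w : E) :
    HasFDerivAt (fun z => fderiv ℝ G z v)
      ((ContinuousLinearMap.apply ℝ ℝ v).comp (fderiv ℝ (fderiv ℝ G) w)) w := by
  have h1 : ContDiff ℝ (⊤ : ℕ∞) (fderiv ℝ G) := hG.fderiv_right (by simp)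
  have h2 : HasFDerivAt (fderiv ℝ G) (fderiv ℝ (fderiv ℝ G) w) w :=
    (h1.differentiable (by simp) w).hasFDerivAt
  exact (ContinuousLinearMap.apply ℝ ℝ v).hasFDerivAt.comp w h2

lemma clairaut {G : E → ℝ} (hG : ContDiff ℝ (⊤ : ℕ∞) G) (w u v : E) :
    fderiv ℝ (fun z => fderiv ℝ G z v) w u = fderiv ℝ (fun z => fderiv ℝ G z u) w v := by
  have hd : ∀ y, HasFDerivAt G (fderiv ℝ G y) y := fun y =>
    (hG.differentiable (by simp) y).hasFDerivAt
  have h1 : ContDiff ℝ (⊤ : ℕ∞) (fderiv ℝ G) := hG.fderiv_right (by simp)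
  have h2 : HasFDerivAt (fderiv ℝ G) (fderiv ℝ (fderiv ℝ G) w) w :=
    (h1.differentiable (by simp) w).hasFDerivAt
  have key := second_derivative_symmetric hd h2 u v
  rw [(hasFDerivAt_fderiv_apply hG v w).fderiv, (hasFDerivAt_fderiv_apply hG u w).fderiv]
  simpa using key

lemma fderiv_mul_apply {f g : E → ℝ} {w : E} (hf : DifferentiableAt ℝ f w)
    (hg : DifferentiableAt ℝ g w) (u : E) :
    fderiv ℝ (fun z => f z * g z) w u
      = fderiv ℝ f w u * g w + f w * fderiv ℝ g w u := by
  rw [fderiv_fun_mul hf hg]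
  simp [mul_comm]
  ring

lemma fderiv_add_apply' {f g : E → ℝ} {w : E} (hf : DifferentiableAt ℝ f w)
    (hg : DifferentiableAt ℝ g w) (u : E) :
    fderiv ℝ (fun z => f z + g z) w u = fderiv ℝ f w u + fderiv ℝ g w u := by
  rw [fderiv_fun_add hf hg]; simp

lemma hasFDerivAt_div' {f g : E → ℝ} {w : E} (hf : DifferentiableAt ℝ f w)
    (hg : DifferentiableAt ℝ g w) (h : g w ≠ 0) :
    HasFDerivAt (fun z => f z / g z)
      (f w • ((-((g w) ^ 2)⁻¹) • fderiv ℝ g w) + (g w)⁻¹ • fderiv ℝ f w) w := by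
  have hinv : HasFDerivAt (fun z => (g z)⁻¹) ((-((g w) ^ 2)⁻¹) • fderiv ℝ g w) w :=
    (hasDerivAt_inv h).comp_hasFDerivAt w hg.hasFDerivAt
  have := hf.hasFDerivAt.mul hinv
  simp only [div_eq_mul_inv]; exact this

lemma fderiv_div_apply {f g : E → ℝ} {w : E} (hf : DifferentiableAt ℝ f w)
    (hg : DifferentiableAt ℝ g w) (h : g w ≠ 0) (u : E) :
    fderiv ℝ (fun z => f z / g z) w u
      = (fderiv ℝ f w u * g w - f w * fderiv ℝ g w u) / g w ^ 2 := by
  rw [(hasFDerivAt_div' hf hg h).fderiv]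
  have h2 : g w ^ 2 ≠ 0 := pow_ne_zero 2 h
  simp only [ContinuousLinearMap.add_apply, ContinuousLinearMap.smul_apply, smul_eq_mul]
  field_simp
  ring

lemma fderiv_log_apply {g : E → ℝ} {w : E} (hg : DifferentiableAt ℝ g w) (h : g w ≠ 0) (u : E) :
    fderiv ℝ (fun z => Real.log (g z)) w u = fderiv ℝ g w u / g w := by
  have h1 := (Real.hasDerivAt_log h).comp_hasFDerivAt w hg.hasFDerivAt
  have h2 : HasFDerivAt (fun z => Real.log (g z)) ((g w)⁻¹ • fderiv ℝ g w) w := h1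
  rw [h2.fderiv]
  simp only [ContinuousLinearMap.smul_apply, smul_eq_mul]
  rw [div_eq_inv_mul]

lemma fderiv_sum_apply' {ι : Type*} [Fintype ι] (f : ι → E → ℝ) {w : E}
    (hf : ∀ i, DifferentiableAt ℝ (f i) w) (u : E) :
    fderiv ℝ (fun z => ∑ i, f i z) w u = ∑ i, fderiv ℝ (f i) w u := by
  rw [fderiv_fun_sum (fun i _ => hf i)]
  simp

lemma algebra_key {ι : Type*} [Fintype ι] (a e : ℝ) (ha : a ≠ 0) (b c dd f T : ι → ℝ) :
    ((∑ i, (b i * c i + e * dd i + T i)) * a - (∑ i, (f i * c i + a * dd i)) * e) / a ^ 2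
      = ∑ i, c i * ((b i * a - e * f i) / a ^ 2) + (∑ i, T i) / a := by
  have e1 : ∑ i, (b i * c i + e * dd i + T i)
      = (∑ i, b i * c i) + e * (∑ i, dd i) + (∑ i, T i) := by
    rw [Finset.sum_add_distrib, Finset.sum_add_distrib, Finset.mul_sum]
  have e2 : ∑ i, (f i * c i + a * dd i) = (∑ i, f i * c i) + a * (∑ i, dd i) := by
    rw [Finset.sum_add_distrib, Finset.mul_sum]
  have e3 : (∑ i, c i * ((b i * a - e * f i) / a ^ 2))
      = ((∑ i, b i * c i) * a - e * (∑ i, f i * c i)) / a ^ 2 := by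
    rw [Finset.sum_mul, Finset.mul_sum, ← Finset.sum_sub_distrib, Finset.sum_div]
    exact Finset.sum_congr rfl fun i _ => by field_simp
  rw [e1, e2, e3]
  field_simp
  ring

lemma key_comp {ι : Type*} [Fintype ι] (A Φ' : E → ℝ) (hA : ContDiff ℝ (⊤ : ℕ∞) A)
    (hΦ : ContDiff ℝ (⊤ : ℕ∞) Φ') (hApos : ∀ z, A z ≠ 0) (u : E) (v : ι → E) (w : E) :
    fderiv ℝ (fun z =>
        (∑ i, fderiv ℝ (fun z' => A z' * fderiv ℝ Φ' z' (v i)) z (v i)) / A z) w u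
      = (∑ i, fderiv ℝ Φ' w (v i) * fderiv ℝ (fun z => fderiv ℝ A z u / A z) w (v i))
        + (∑ i, fderiv ℝ (fun z => A z * fderiv ℝ (fun z' => fderiv ℝ Φ' z' u) z (v i)) w (v i))
            / A w := by
  classical
  have hDA : ∀ s : E, ContDiff ℝ (⊤ : ℕ∞) (fun z => fderiv ℝ A z s) := contDiff_fderiv_apply hA
  have hDΦ : ∀ s : E, ContDiff ℝ (⊤ : ℕ∞) (fun z => fderiv ℝ Φ' z s) := contDiff_fderiv_apply hΦ
  have hG : ∀ i : ι, ContDiff ℝ (⊤ : ℕ∞) (fun z => A z * fderiv ℝ Φ' z (v i)) := fun i =>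
    hA.mul (hDΦ (v i))
  have hDG : ∀ i : ι, ContDiff ℝ (⊤ : ℕ∞)
      (fun z => fderiv ℝ (fun z' => A z' * fderiv ℝ Φ' z' (v i)) z (v i)) := fun i =>
    contDiff_fderiv_apply (hG i) (v i)
  have hN : ContDiff ℝ (⊤ : ℕ∞) (fun z =>
      ∑ i, fderiv ℝ (fun z' => A z' * fderiv ℝ Φ' z' (v i)) z (v i)) :=
    ContDiff.sum fun i _ => hDG i
  have hT : ∀ i : ι, ContDiff ℝ (⊤ : ℕ∞)
      (fun z => A z * fderiv ℝ (fun z' => fderiv ℝ Φ' z' u) z (v i)) := fun i =>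
    hA.mul (contDiff_fderiv_apply (hDΦ u) (v i))
  rw [fderiv_div_apply (hN.differentiable (by simp) w) (hA.differentiable (by simp) w) (hApos w) u]
  rw [fderiv_sum_apply' _ (fun i => (hDG i).differentiable (by simp) w) u]
  have term1 : ∀ i : ι,
      fderiv ℝ (fun z => fderiv ℝ (fun z' => A z' * fderiv ℝ Φ' z' (v i)) z (v i)) w u
        = fderiv ℝ (fun z => fderiv ℝ A z u) w (v i) * fderiv ℝ Φ' w (v i)
          + fderiv ℝ A w u * fderiv ℝ (fun z => fderiv ℝ Φ' z (v i)) w (v i)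
          + fderiv ℝ (fun z => A z * fderiv ℝ (fun z' => fderiv ℝ Φ' z' u) z (v i)) w (v i) := by
    intro i
    rw [clairaut (hG i) w u (v i)]
    have hfun : (fun z => fderiv ℝ (fun z' => A z' * fderiv ℝ Φ' z' (v i)) z u)
        = fun z => fderiv ℝ A z u * fderiv ℝ Φ' z (v i)
            + A z * fderiv ℝ (fun z' => fderiv ℝ Φ' z' u) z (v i) := by
      funext z
      rw [fderiv_mul_apply (hA.differentiable (by simp) z)
            ((hDΦ (v i)).differentiable (by simp) z) u,
          clairaut hΦ z u (v i)]
    rw [hfun,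
      fderiv_add_apply'
        (((hDA u).mul (hDΦ (v i))).differentiable (by simp) w)
        ((hT i).differentiable (by simp) w) (v i),
      fderiv_mul_apply ((hDA u).differentiable (by simp) w)
        ((hDΦ (v i)).differentiable (by simp) w) (v i)]
  simp_rw [term1]
  have Nw : (∑ i, fderiv ℝ (fun z' => A z' * fderiv ℝ Φ' z' (v i)) w (v i))
      = ∑ i, (fderiv ℝ A w (v i) * fderiv ℝ Φ' w (v i)
          + A w * fderiv ℝ (fun z => fderiv ℝ Φ' z (v i)) w (v i)) :=
    Finset.sum_congr rfl fun i _ =>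
      fderiv_mul_apply (hA.differentiable (by simp) w) ((hDΦ (v i)).differentiable (by simp) w) (v i)
  rw [Nw]
  have sc : ∀ i : ι, fderiv ℝ (fun z => fderiv ℝ A z u / A z) w (v i)
      = (fderiv ℝ (fun z => fderiv ℝ A z u) w (v i) * A w
          - fderiv ℝ A w u * fderiv ℝ A w (v i)) / A w ^ 2 := fun i =>
    fderiv_div_apply ((hDA u).differentiable (by simp) w) (hA.differentiable (by simp) w) (hApos w) (v i)
  simp_rw [sc]
  exact algebra_key (A w) (fderiv ℝ A w u) (hApos w)
    (fun i => fderiv ℝ (fun z => fderiv ℝ A z u) w (v i))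
    (fun i => fderiv ℝ Φ' w (v i))
    (fun i => fderiv ℝ (fun z => fderiv ℝ Φ' z (v i)) w (v i))
    (fun i => fderiv ℝ A w (v i))
    (fun i => fderiv ℝ (fun z => A z * fderiv ℝ (fun z' => fderiv ℝ Φ' z' u) z (v i)) w (v i))

end Aux2

section Pointwise

variable {d p : ℕ}

lemma pointwise_main (q Φ : (Fin d → ℝ) → (Fin p → ℝ) → ℝ)
    (hpos : ∀ θ x, 0 < q θ x)
    (hq : ContDiff ℝ (⊤ : ℕ∞) (fun pr : (Fin d → ℝ) × (Fin p → ℝ) => q pr.1 pr.2))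
    (hΦsm : ContDiff ℝ (⊤ : ℕ∞) (fun pr : (Fin d → ℝ) × (Fin p → ℝ) => Φ pr.1 pr.2))
    (θs : Fin d → ℝ) (j k : Fin d)
    (hev : ∀ᶠ θ in nhds θs, ∀ x, stein (q θ) (fun y => gradv (Φ θ) y) x
        = - pdv j (fun θ' => Real.log (q θ' x)) θ) (x : Fin p → ℝ) :
    pdv k (fun θ => pdv j (fun θ' => Real.log (q θ' x)) θ) θs
      = -(∑ i, gradv (Φ θs) x i * scoreGrad q θs k x i)
        - stein (q θs) (fun y => gradv (fun z => pdv k (fun θ => Φ θ z) θs) y) x := by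
  classical
  have hA : ContDiff ℝ (⊤ : ℕ∞) (fun w : (Fin d → ℝ) × (Fin p → ℝ) => q w.1 w.2) := hq
  have hΦ' : ContDiff ℝ (⊤ : ℕ∞) (fun w : (Fin d → ℝ) × (Fin p → ℝ) => Φ w.1 w.2) := hΦsm
  set A := fun w : (Fin d → ℝ) × (Fin p → ℝ) => q w.1 w.2 with hA_def
  set Φ' := fun w : (Fin d → ℝ) × (Fin p → ℝ) => Φ w.1 w.2 with hΦ'_def
  have hApos : ∀ w, A w ≠ 0 := fun w => (hpos w.1 w.2).ne'
  set L := fun w : (Fin d → ℝ) × (Fin p → ℝ) => Real.log (A w) with hL_def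
  have hL : ContDiff ℝ (⊤ : ℕ∞) L := hA.log hApos
  set u : (Fin d → ℝ) × (Fin p → ℝ) := (Pi.single k 1, 0) with hu_def
  set uj : (Fin d → ℝ) × (Fin p → ℝ) := (Pi.single j 1, 0) with huj_def
  set v : Fin p → (Fin d → ℝ) × (Fin p → ℝ) := fun i => (0, Pi.single i 1) with hv_def
  -- gradient of Φ in x
  have grad_eq : ∀ θ y (i : Fin p), gradv (Φ θ) y i = fderiv ℝ Φ' (θ, y) (v i) := by
    intro θ y i
    show pdv i (fun y' => Φ' (θ, y')) y = fderiv ℝ Φ' (θ, y) (v i)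
    rw [pdv_snd Φ' (hΦ'.differentiable (by simp)) θ y i, hv_def]
  -- score functions
  have score_eq : ∀ θ x', pdv j (fun θ' => Real.log (q θ' x')) θ = fderiv ℝ L (θ, x') uj := by
    intro θ x'
    show pdv j (fun θ' => L (θ', x')) θ = fderiv ℝ L (θ, x') uj
    rw [pdv_fst L (hL.differentiable (by simp)) θ x' j, huj_def]
  have score_eq_k : ∀ θ x', pdv k (fun θ' => Real.log (q θ' x')) θ = fderiv ℝ L (θ, x') u := by
    intro θ x'
    show pdv k (fun θ' => L (θ', x')) θ = fderiv ℝ L (θ, x') u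
    rw [pdv_fst L (hL.differentiable (by simp)) θ x' k, hu_def]
  -- smoothness of auxiliary functions
  have hDΦu : ContDiff ℝ (⊤ : ℕ∞) (fun w => fderiv ℝ Φ' w u) := contDiff_fderiv_apply hΦ' u
  have hDLu : ContDiff ℝ (⊤ : ℕ∞) (fun w => fderiv ℝ L w u) := contDiff_fderiv_apply hL u
  have hDLuj : ContDiff ℝ (⊤ : ℕ∞) (fun w => fderiv ℝ L w uj) := contDiff_fderiv_apply hL uj
  have hGi : ∀ i : Fin p, ContDiff ℝ (⊤ : ℕ∞) (fun w => A w * fderiv ℝ Φ' w (v i)) := fun i =>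
    hA.mul (contDiff_fderiv_apply hΦ' (v i))
  have hN : ContDiff ℝ (⊤ : ℕ∞)
      (fun w => ∑ i, fderiv ℝ (fun z' => A z' * fderiv ℝ Φ' z' (v i)) w (v i)) :=
    ContDiff.sum fun i _ => contDiff_fderiv_apply (hGi i) (v i)
  have hS : ContDiff ℝ (⊤ : ℕ∞) (fun w =>
      (∑ i, fderiv ℝ (fun z' => A z' * fderiv ℝ Φ' z' (v i)) w (v i)) / A w) :=
    hN.div hA hApos
  -- the Stein operator as a smooth function of (θ, x)
  have stein_eq : ∀ θ x',
      stein (q θ) (fun y => gradv (Φ θ) y) x'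
        = (∑ i, fderiv ℝ (fun z' => A z' * fderiv ℝ Φ' z' (v i)) (θ, x') (v i)) / A (θ, x') := by
    intro θ x'
    have h1 : ∀ i : Fin p, pdv i (fun y => q θ y * gradv (Φ θ) y i) x'
        = fderiv ℝ (fun w => A w * fderiv ℝ Φ' w (v i)) (θ, x') (v i) := by
      intro i
      have hfe : (fun y => q θ y * gradv (Φ θ) y i)
          = fun y => (fun w => A w * fderiv ℝ Φ' w (v i)) (θ, y) := by
        funext y
        simp only []
        rw [grad_eq θ y i]
      rw [hfe, pdv_snd _ ((hGi i).differentiable (by simp)) θ x' i, hv_def]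
    show (∑ i, pdv i (fun y => q θ y * gradv (Φ θ) y i) x') / q θ x' = _
    rw [Finset.sum_congr rfl fun i _ => h1 i]
  -- differentiate the Stein equation in θ_k at θs
  have hder : pdv k (fun θ => (∑ i, fderiv ℝ
        (fun z' => A z' * fderiv ℝ Φ' z' (v i)) (θ, x) (v i)) / A (θ, x)) θs
      = pdv k (fun θ => -(fderiv ℝ L (θ, x) uj)) θs := by
    have hupd : Tendsto (fun t => Function.update θs k t) (nhds (θs k)) (nhds θs) := by
      have h := (hasDerivAt_update θs k (θs k)).continuousAt.tendsto
      rwa [Function.update_eq_self] at h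
    have hev2 : (fun t => (∑ i, fderiv ℝ (fun z' => A z' * fderiv ℝ Φ' z' (v i))
          (Function.update θs k t, x) (v i)) / A (Function.update θs k t, x))
        =ᶠ[nhds (θs k)] fun t => -(fderiv ℝ L (Function.update θs k t, x) uj) := by
      filter_upwards [hupd.eventually hev] with t ht
      rw [← stein_eq, ht x, score_eq]
    exact hev2.deriv_eq
  -- express the two pdv's as fderiv's
  have lhs_eq : pdv k (fun θ => pdv j (fun θ' => Real.log (q θ' x)) θ) θs
      = fderiv ℝ (fun w => fderiv ℝ L w uj) (θs, x) u := by
    have hfe : (fun θ => pdv j (fun θ' => Real.log (q θ' x)) θ)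
        = fun θ => (fun w => fderiv ℝ L w uj) (θ, x) := funext fun θ => score_eq θ x
    rw [hfe, pdv_fst _ (hDLuj.differentiable (by simp)) θs x k, hu_def]
  have rhs1 : pdv k (fun θ => (∑ i, fderiv ℝ
        (fun z' => A z' * fderiv ℝ Φ' z' (v i)) (θ, x) (v i)) / A (θ, x)) θs
      = fderiv ℝ (fun w => (∑ i, fderiv ℝ
          (fun z' => A z' * fderiv ℝ Φ' z' (v i)) w (v i)) / A w) (θs, x) u := by
    rw [pdv_fst _ (hS.differentiable (by simp)) θs x k, hu_def]
  have rhs2 : pdv k (fun θ => -(fderiv ℝ L (θ, x) uj)) θs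
      = - fderiv ℝ (fun w => fderiv ℝ L w uj) (θs, x) u := by
    rw [pdv_fst (fun w => -(fderiv ℝ L w uj)) (hDLuj.neg.differentiable (by simp)) θs x k,
      fderiv_fun_neg, hu_def]
    simp
  have main1 : fderiv ℝ (fun w => fderiv ℝ L w uj) (θs, x) u
      = - fderiv ℝ (fun w => (∑ i, fderiv ℝ
          (fun z' => A z' * fderiv ℝ Φ' z' (v i)) w (v i)) / A w) (θs, x) u := by
    have h := hder
    rw [rhs1, rhs2] at h
    linarith
  -- key computation
  have hkey := key_comp A Φ' hA hΦ' hApos u v (θs, x)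
  -- identify scoreGrad
  have hscore : ∀ i : Fin p, scoreGrad q θs k x i
      = fderiv ℝ (fun w => fderiv ℝ A w u / A w) (θs, x) (v i) := by
    intro i
    have hfe : (fun z => pdv k (fun θ' => Real.log (q θ' z)) θs)
        = fun z => (fun w => fderiv ℝ L w u) (θs, z) := funext fun z => score_eq_k θs z
    have hfl : (fun w => fderiv ℝ L w u) = fun w => fderiv ℝ A w u / A w := by
      funext w0
      exact fderiv_log_apply (hA.differentiable (by simp) w0) (hApos w0) u
    show pdv i (fun z => pdv k (fun θ' => Real.log (q θ' z)) θs) x = _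
    rw [hfe, ← hfl, pdv_snd _ (hDLu.differentiable (by simp)) θs x i, hv_def]
  have hsum_eq : (∑ i, gradv (Φ θs) x i * scoreGrad q θs k x i)
      = ∑ i, fderiv ℝ Φ' (θs, x) (v i)
          * fderiv ℝ (fun w => fderiv ℝ A w u / A w) (θs, x) (v i) :=
    Finset.sum_congr rfl fun i _ => by rw [grad_eq θs x i, hscore i]
  -- identify the Stein term of the differentiated score
  have hstein2 : stein (q θs) (fun y => gradv (fun z => pdv k (fun θ => Φ θ z) θs) y) x
      = (∑ i, fderiv ℝ (fun w => A w * fderiv ℝ (fun w' => fderiv ℝ Φ' w' u) w (v i))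
            (θs, x) (v i)) / A (θs, x) := by
    have hψ : (fun z => pdv k (fun θ => Φ θ z) θs)
        = fun z => (fun w => fderiv ℝ Φ' w u) (θs, z) := by
      funext z
      show pdv k (fun θ => Φ' (θ, z)) θs = fderiv ℝ Φ' (θs, z) u
      rw [pdv_fst Φ' (hΦ'.differentiable (by simp)) θs z k, hu_def]
    have h1 : ∀ (y) (i : Fin p), gradv (fun z => pdv k (fun θ => Φ θ z) θs) y i
        = fderiv ℝ (fun w => fderiv ℝ Φ' w u) (θs, y) (v i) := by
      intro y i
      show pdv i (fun z => pdv k (fun θ => Φ θ z) θs) y = _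
      rw [hψ, pdv_snd _ (hDΦu.differentiable (by simp)) θs y i, hv_def]
    have h2 : ∀ i : Fin p,
        pdv i (fun y => q θs y * gradv (fun z => pdv k (fun θ => Φ θ z) θs) y i) x
        = fderiv ℝ (fun w => A w * fderiv ℝ (fun w' => fderiv ℝ Φ' w' u) w (v i))
            (θs, x) (v i) := by
      intro i
      have hfe : (fun y => q θs y * gradv (fun z => pdv k (fun θ => Φ θ z) θs) y i)
          = fun y => (fun w => A w * fderiv ℝ (fun w' => fderiv ℝ Φ' w' u) w (v i)) (θs, y) := by
        funext y
        simp only []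
        rw [h1 y i]
      rw [hfe, pdv_snd _ ((hA.mul (contDiff_fderiv_apply hDΦu (v i))).differentiable (by simp))
        θs x i, hv_def]
    show (∑ i, pdv i (fun y => q θs y
        * gradv (fun z => pdv k (fun θ => Φ θ z) θs) y i) x) / q θs x = _
    rw [Finset.sum_congr rfl fun i _ => h2 i]
  rw [lhs_eq, main1, hkey, hsum_eq, hstein2]
  ring

lemma swap_main (q : (Fin d → ℝ) → (Fin p → ℝ) → ℝ)
    (hpos : ∀ θ x, 0 < q θ x)
    (hq : ContDiff ℝ (⊤ : ℕ∞) (fun pr : (Fin d → ℝ) × (Fin p → ℝ) => q pr.1 pr.2))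
    (θs : Fin d → ℝ) (j k : Fin d) (x : Fin p → ℝ) :
    pdv j (fun θ => pdv k (fun θ' => Real.log (q θ' x)) θ) θs
      = pdv k (fun θ => pdv j (fun θ' => Real.log (q θ' x)) θ) θs := by
  have hA : ContDiff ℝ (⊤ : ℕ∞) (fun w : (Fin d → ℝ) × (Fin p → ℝ) => q w.1 w.2) := hq
  have hApos : ∀ w : (Fin d → ℝ) × (Fin p → ℝ), q w.1 w.2 ≠ 0 := fun w => (hpos w.1 w.2).ne'
  have hL : ContDiff ℝ (⊤ : ℕ∞) (fun w : (Fin d → ℝ) × (Fin p → ℝ) => Real.log (q w.1 w.2)) :=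
    hA.log hApos
  set L := fun w : (Fin d → ℝ) × (Fin p → ℝ) => Real.log (q w.1 w.2) with hL_def
  have score_eq : ∀ (m : Fin d) θ x', pdv m (fun θ' => Real.log (q θ' x')) θ
      = fderiv ℝ L (θ, x') (Pi.single m 1, 0) := by
    intro m θ x'
    show pdv m (fun θ' => L (θ', x')) θ = _
    rw [pdv_fst L (hL.differentiable (by simp)) θ x' m]
  have h1 : (fun θ => pdv k (fun θ' => Real.log (q θ' x)) θ)
      = fun θ => (fun w => fderiv ℝ L w ((Pi.single k 1 : Fin d → ℝ), (0 : Fin p → ℝ))) (θ, x) :=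
    funext fun θ => score_eq k θ x
  have h2 : (fun θ => pdv j (fun θ' => Real.log (q θ' x)) θ)
      = fun θ => (fun w => fderiv ℝ L w ((Pi.single j 1 : Fin d → ℝ), (0 : Fin p → ℝ))) (θ, x) :=
    funext fun θ => score_eq j θ x
  rw [h1, h2,
    pdv_fst _ ((contDiff_fderiv_apply hL _).differentiable (by simp)) θs x j,
    pdv_fst _ ((contDiff_fderiv_apply hL _).differentiable (by simp)) θs x k]
  exact clairaut hL (θs, x) _ _

end Pointwise
/-- `E_{θ*}[∂_{θₖ}∂_{θⱼ} log q_{θ*}] = −E_{θ*}[⟨∇ₓΦ_{θ*,j}, ∇ₓ∂_{θₖ} log q_{θ*}⟩]`;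
in particular, if Bartlett's second identity holds then the Fisher information entry equals the
Wasserstein–Fisher cross-Gram entry. -/
theorem stmt7 {d p : ℕ} (Θ : Set (Fin d → ℝ)) (hΘ : IsOpen Θ)
    (q : (Fin d → ℝ) → (Fin p → ℝ) → ℝ)
    (hpos : ∀ θ x, 0 < q θ x)
    (hsmooth : ContDiff ℝ (⊤ : ℕ∞) (fun pr : (Fin d → ℝ) × (Fin p → ℝ) => q pr.1 pr.2))
    (θs : Fin d → ℝ) (hθs : θs ∈ Θ) (j k : Fin d)
    -- Wasserstein score functions Φ_{θ,j} exist near θ* and are jointly smooth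
    (Φ : (Fin d → ℝ) → (Fin p → ℝ) → ℝ)
    (hΦsm : ContDiff ℝ (⊤ : ℕ∞) (fun pr : (Fin d → ℝ) × (Fin p → ℝ) => Φ pr.1 pr.2))
    (hΦ : ∀ᶠ θ in nhds θs,
        (∀ x, stein (q θ) (fun y => gradv (Φ θ) y) x
            = - pdv j (fun θ' => Real.log (q θ' x)) θ)
        ∧ ∫ x, q θ x * Φ θ x = 0)
    -- `E_{θ*}[A_{θ*}(∇ₓ ∂_{θₖ} Φ_{θ,j}|_{θ*})] = 0`
    (h0 : ∫ x, q θs x *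
        stein (q θs) (fun y => gradv (fun z => pdv k (fun θ => Φ θ z) θs) y) x = 0)
    -- integrability of the relevant functions
    (hint1 : Integrable (fun x =>
        q θs x * pdv k (fun θ => pdv j (fun θ' => Real.log (q θ' x)) θ) θs))
    (hint2 : Integrable (fun x =>
        q θs x * ∑ i, gradv (Φ θs) x i * scoreGrad q θs k x i))
    (hint3 : Integrable (fun x => q θs x *
        (pdv j (fun θ => Real.log (q θ x)) θs * pdv k (fun θ => Real.log (q θ x)) θs))) :
    (∫ x, q θs x * pdv k (fun θ => pdv j (fun θ' => Real.log (q θ' x)) θ) θs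
        = - ∫ x, q θs x * ∑ i, gradv (Φ θs) x i * scoreGrad q θs k x i)
    ∧ ((∫ x, q θs x *
          (pdv j (fun θ => Real.log (q θ x)) θs * pdv k (fun θ => Real.log (q θ x)) θs))
          = - ∫ x, q θs x * pdv j (fun θ => pdv k (fun θ' => Real.log (q θ' x)) θ) θs
        → (∫ x, q θs x *
            (pdv j (fun θ => Real.log (q θ x)) θs * pdv k (fun θ => Real.log (q θ x)) θs))
            = ∫ x, q θs x * ∑ i, gradv (Φ θs) x i * scoreGrad q θs k x i) := by
  have hptw := pointwise_main q Φ hpos hsmooth hΦsm θs j k (hΦ.mono fun θ h => h.1)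
  have hg3i : Integrable (fun x => q θs x *
      stein (q θs) (fun y => gradv (fun z => pdv k (fun θ => Φ θ z) θs) y) x) := by
    have hg3eq : (fun x => q θs x *
        stein (q θs) (fun y => gradv (fun z => pdv k (fun θ => Φ θ z) θs) y) x)
        = fun x => -(q θs x * pdv k (fun θ => pdv j (fun θ' => Real.log (q θ' x)) θ) θs)
            - q θs x * ∑ i, gradv (Φ θs) x i * scoreGrad q θs k x i := by
      funext x
      linear_combination (q θs x) * hptw x
    rw [hg3eq]
    exact hint1.neg.sub hint2
  have part1 : ∫ x, q θs x * pdv k (fun θ => pdv j (fun θ' => Real.log (q θ' x)) θ) θs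
      = - ∫ x, q θs x * ∑ i, gradv (Φ θs) x i * scoreGrad q θs k x i := by
    have heq : (fun x => q θs x * pdv k (fun θ => pdv j (fun θ' => Real.log (q θ' x)) θ) θs)
        = fun x => (-(q θs x * ∑ i, gradv (Φ θs) x i * scoreGrad q θs k x i))
            - q θs x * stein (q θs) (fun y => gradv (fun z => pdv k (fun θ => Φ θ z) θs) y) x := by
      funext x
      linear_combination (q θs x) * hptw x
    have hneg : Integrable (fun x =>
        -(q θs x * ∑ i, gradv (Φ θs) x i * scoreGrad q θs k x i)) := hint2.neg
    rw [heq, integral_sub hneg hg3i, h0, sub_zero, integral_neg]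
  refine ⟨part1, fun hB => ?_⟩
  have hsw : (fun x => q θs x * pdv j (fun θ => pdv k (fun θ' => Real.log (q θ' x)) θ) θs)
      = fun x => q θs x * pdv k (fun θ => pdv j (fun θ' => Real.log (q θ' x)) θ) θs :=
    funext fun x => by rw [swap_main q hpos hsmooth θs j k x]
  have hInt : (∫ x, q θs x * pdv j (fun θ => pdv k (fun θ' => Real.log (q θ' x)) θ) θs)
      = ∫ x, q θs x * pdv k (fun θ => pdv j (fun θ' => Real.log (q θ' x)) θ) θs := by
    rw [hsw]
  rw [hInt, part1, neg_neg] at hB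
  exact hB
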